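/- Fix integers n ≥ 2 and N ≥ 1, a map g : ℝ^(2n−1) → ℝ that is Lipschitz with constant L_f ≥ 0, a map ĉ : ℝ × ℝ^(2n−1) → ℝ, a dataset of triples (y_i^{++}, ζ_i, u_i) ∈ ℝ × ℝ^(2n−1) × ℝ, i = 1,…,N, and a function γ_u : [0,∞) → [0,∞) such that |u_i − ĉ(y_i^{++}, ζ)| ≤ γ_u(‖ζ_i − ζ‖) for every i and every ζ ∈ ℝ^(2n−1). Define the delayed closed-loop one-step map Φ₂(ζ, y_r) := (y₂,…,yₙ, g(ζ), u₂,…,u_{n−1}, ĉ(y_r, ζ)) for ζ = (y₁,…,yₙ,u₁,…,u_{n−1}), and for each i set ζ_i⁺ := (y_{i,2},…,y_{i,n}, g(ζ_i), u_{i,2},…,u_{i,n−1}, u_i). Then for every i and every ζ ∈ ℝ^(2n−1), ‖ζ_i⁺ − Φ₂(ζ, y_i^{++})‖ ≤ γ_u(‖ζ_i − ζ‖) + (1 + L_f)·‖ζ_i − ζ‖. -/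

import Mathlib

/-- The delayed closed-loop one-step map:
`Φ₂(ζ, yr) = (y₂,…,yₙ, g(ζ), u₂,…,u_{n−1}, ĉ(yr, ζ))` for the augmented state
`ζ = (y₁,…,yₙ,u₁,…,u_{n−1}) ∈ ℝ^(2n−1)`; the one-step output `g(ζ)` does not depend
on the current input, which enters only the last coordinate. -/
noncomputable def Phi2 (n : ℕ) (g : EuclideanSpace ℝ (Fin (2*n-1)) → ℝ)
    (chat : ℝ → EuclideanSpace ℝ (Fin (2*n-1)) → ℝ)
    (ζ : EuclideanSpace ℝ (Fin (2*n-1))) (yr : ℝ) : EuclideanSpace ℝ (Fin (2*n-1)) :=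
  WithLp.toLp 2 (fun (k : Fin (2*n-1)) =>
    if (k : ℕ) = n - 1 then g ζ
    else if h : (k : ℕ) = 2*n - 2 then chat yr ζ
    else ζ ⟨(k : ℕ) + 1, by have := k.isLt; omega⟩)

/-- For a data triple `(y_i^{++}, ζ_i, u_i)`, the shifted successor state
`ζ_i⁺ = (y_{i,2},…,y_{i,n}, g(ζ_i), u_{i,2},…,u_{i,n−1}, u_i)`. -/
noncomputable def zplus2 (n : ℕ) (g : EuclideanSpace ℝ (Fin (2*n-1)) → ℝ)
    (ζ : EuclideanSpace ℝ (Fin (2*n-1))) (ui : ℝ) : EuclideanSpace ℝ (Fin (2*n-1)) :=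
  WithLp.toLp 2 (fun (k : Fin (2*n-1)) =>
    if (k : ℕ) = n - 1 then g ζ
    else if h : (k : ℕ) = 2*n - 2 then ui
    else ζ ⟨(k : ℕ) + 1, by have := k.isLt; omega⟩)

/-!
`Φ₂(ζ, y)` is the successor state `ζ⁺` built from `ζ` with the input `ĉ(y, ζ)`, and `ζ⁺` depends
linearly on `(ζ, g(ζ), u)`. So the difference is the successor built from `(ζ_i − ζ, g(ζ_i) − g(ζ),
u_i − ĉ)`: the output slot and the input slot contribute at most `L_f‖ζ_i − ζ‖` and `γ_u(‖ζ_i − ζ‖)`,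
and the remaining coordinates are entries of `ζ_i − ζ` read through the rotation `k ↦ k + 1`,
which cannot increase the Euclidean norm.
-/

theorem EuclideanSpace.norm_le_of_abs_le_comp {ι κ : Type*} [Fintype ι] [Fintype κ]
    {x : EuclideanSpace ℝ ι} {y : EuclideanSpace ℝ κ} (e : ι ↪ κ)
    (h : ∀ k, |x k| ≤ |y (e k)|) : ‖x‖ ≤ ‖y‖ := by
  rw [EuclideanSpace.norm_eq, EuclideanSpace.norm_eq]
  gcongr
  calc ∑ k, ‖x k‖ ^ 2 ≤ ∑ k, ‖y (e k)‖ ^ 2 := by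
        gcongr with k
        exact h k
    _ = ∑ j ∈ Finset.univ.map e, ‖y j‖ ^ 2 :=
        (Finset.sum_map Finset.univ e fun j => ‖y j‖ ^ 2).symm
    _ ≤ ∑ j, ‖y j‖ ^ 2 :=
        Finset.sum_le_sum_of_subset_of_nonneg (Finset.subset_univ _) fun _ _ _ => by positivity

theorem val_finRotate_of_succ_lt {m : ℕ} (k : Fin m) (h : k.val + 1 < m) :
    (finRotate m k).val = k.val + 1 := by
  obtain ⟨m, rfl⟩ : ∃ m', m = m' + 1 := ⟨m - 1, by omega⟩
  exact coe_finRotate_of_ne_last (Fin.ne_of_val_ne (by simp only [Fin.val_last]; omega))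

theorem Phi2_eq_zplus2 (n : ℕ) (g : EuclideanSpace ℝ (Fin (2*n-1)) → ℝ)
    (chat : ℝ → EuclideanSpace ℝ (Fin (2*n-1)) → ℝ)
    (ζ : EuclideanSpace ℝ (Fin (2*n-1))) (yr : ℝ) :
    Phi2 n g chat ζ yr = zplus2 n g ζ (chat yr ζ) := rfl

theorem zplus2_sub_zplus2 (n : ℕ) (g : EuclideanSpace ℝ (Fin (2*n-1)) → ℝ)
    (ζ₁ ζ₂ : EuclideanSpace ℝ (Fin (2*n-1))) (u₁ u₂ : ℝ) :
    zplus2 n g ζ₁ u₁ - zplus2 n g ζ₂ u₂ =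
      zplus2 n (fun _ => g ζ₁ - g ζ₂) (ζ₁ - ζ₂) (u₁ - u₂) := by
  ext k
  simp only [zplus2, PiLp.sub_apply]
  split_ifs <;> rfl

theorem norm_zplus2_le {n : ℕ} (hn : 2 ≤ n) (g : EuclideanSpace ℝ (Fin (2*n-1)) → ℝ)
    (ζ : EuclideanSpace ℝ (Fin (2*n-1))) (u : ℝ) :
    ‖zplus2 n g ζ u‖ ≤ |g ζ| + |u| + ‖ζ‖ := by
  set A := EuclideanSpace.single (⟨n - 1, by omega⟩ : Fin (2*n-1)) (g ζ)
  set B := EuclideanSpace.single (⟨2*n - 2, by omega⟩ : Fin (2*n-1)) u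
  have hshift : ‖zplus2 n g ζ u - A - B‖ ≤ ‖ζ‖ := by
    refine EuclideanSpace.norm_le_of_abs_le_comp (finRotate _).toEmbedding fun k => ?_
    simp only [PiLp.sub_apply, zplus2, A, B, PiLp.single_apply, Fin.ext_iff]
    split_ifs
    · omega
    · simp
    · simp
    · have hrot : finRotate _ k = ⟨k + 1, by omega⟩ :=
        Fin.ext (val_finRotate_of_succ_lt k (by omega))
      rw [Equiv.coe_toEmbedding, hrot, sub_zero, sub_zero]
  calc ‖zplus2 n g ζ u‖ = ‖A + B + (zplus2 n g ζ u - A - B)‖ := by abel_nf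
    _ ≤ ‖A‖ + ‖B‖ + ‖zplus2 n g ζ u - A - B‖ := norm_add₃_le
    _ ≤ |g ζ| + |u| + ‖ζ‖ := by
        simp only [A, B, PiLp.norm_single, Real.norm_eq_abs]
        linarith

theorem stmt_10_general (n N : ℕ) (hn : 2 ≤ n)
    (g : EuclideanSpace ℝ (Fin (2*n-1)) → ℝ)
    (Lf : ℝ)
    (hLf : ∀ ζ ζ' : EuclideanSpace ℝ (Fin (2*n-1)), |g ζ - g ζ'| ≤ Lf * ‖ζ - ζ'‖)
    (chat : ℝ → EuclideanSpace ℝ (Fin (2*n-1)) → ℝ)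
    (yd : Fin N → ℝ) (ζd : Fin N → EuclideanSpace ℝ (Fin (2*n-1))) (ud : Fin N → ℝ)
    (γu : ℝ → ℝ)
    (hγu : ∀ (i : Fin N) (ζ : EuclideanSpace ℝ (Fin (2*n-1))),
      |ud i - chat (yd i) ζ| ≤ γu ‖ζd i - ζ‖) :
    ∀ (i : Fin N) (ζ : EuclideanSpace ℝ (Fin (2*n-1))),
      ‖zplus2 n g (ζd i) (ud i) - Phi2 n g chat ζ (yd i)‖ ≤
        γu ‖ζd i - ζ‖ + (1 + Lf) * ‖ζd i - ζ‖ := by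
  intro i ζ
  have hbound := norm_zplus2_le hn (fun _ => g (ζd i) - g ζ) (ζd i - ζ) (ud i - chat (yd i) ζ)
  rw [← zplus2_sub_zplus2, ← Phi2_eq_zplus2] at hbound
  linarith [hLf (ζd i) ζ, hγu i ζ]

/-- Proposition 5: augmented-state bound for NARX systems with a
one-step input delay: `‖ζ_i⁺ − Φ₂(ζ, y_i^{++})‖ ≤ γ_u(‖ζ_i − ζ‖) + (1 + L_f)·‖ζ_i − ζ‖`. -/
theorem stmt_10 (n N : ℕ) (hn : 2 ≤ n) (hN : 1 ≤ N)
    (g : EuclideanSpace ℝ (Fin (2*n-1)) → ℝ)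
    (Lf : ℝ) (hLf0 : 0 ≤ Lf)
    (hLf : ∀ ζ ζ' : EuclideanSpace ℝ (Fin (2*n-1)), |g ζ - g ζ'| ≤ Lf * ‖ζ - ζ'‖)
    (chat : ℝ → EuclideanSpace ℝ (Fin (2*n-1)) → ℝ)
    (yd : Fin N → ℝ) (ζd : Fin N → EuclideanSpace ℝ (Fin (2*n-1))) (ud : Fin N → ℝ)
    (γu : ℝ → ℝ) (hγu_nonneg : ∀ s, 0 ≤ s → 0 ≤ γu s)
    (hγu : ∀ (i : Fin N) (ζ : EuclideanSpace ℝ (Fin (2*n-1))),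
      |ud i - chat (yd i) ζ| ≤ γu ‖ζd i - ζ‖) :
    ∀ (i : Fin N) (ζ : EuclideanSpace ℝ (Fin (2*n-1))),
      ‖zplus2 n g (ζd i) (ud i) - Phi2 n g chat ζ (yd i)‖ ≤
        γu ‖ζd i - ζ‖ + (1 + Lf) * ‖ζd i - ζ‖ :=
  stmt_10_general n N hn g Lf hLf chat yd ζd ud γu hγu
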